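/- Let u ∈ {0,1,2}^n index the monomial prime P_u = ⟨p_{ij} : 1 ≤ i ≤ u_j, 1 ≤ j ≤ n⟩ where p_{1j}=x_j, p_{2j}=y_j, p_{3j}=z_j, and let F_u = {p_{ij} : u_j < i ≤ 3, 1 ≤ j ≤ n} be the corresponding facet of the Stanley–Reisner complex of M_n. Restrict to the vectors u that either have exactly three coordinates equal to 1 and the rest equal to 2, or have one coordinate 0, one coordinate 1, and the rest 2. Then the ordering of the facets F_u by lexicographically increasing u (from (0,1,2,...,2) to (2,...,2,1,0)) is a shelling: for each u other than the first, the set η_u = {p_{u_j+1, j} : j > 1, u_j + 1 ≤ 2} is the unique minimal face of F_u among the faces of F_u not contained in any earlier facet. -/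
import Mathlib


noncomputable section

variable {n : ℕ}

/-- The admissible exponent vectors `u ∈ {0,1,2}^n`: either exactly three coordinates
equal `1` and the rest equal `2` (type `P_{ijk}`), or one coordinate is `0`, one is `1`
and the rest are `2` (type `Q_{ij}`). -/
def Admissible (u : Fin n → Fin 3) : Prop :=
  ((∀ j, u j = 1 ∨ u j = 2) ∧ (Finset.univ.filter fun j => u j = 1).card = 3) ∨
  (∃ j₀ j₁ : Fin n, j₀ ≠ j₁ ∧ u j₀ = 0 ∧ u j₁ = 1 ∧
    ∀ j, j ≠ j₀ → j ≠ j₁ → u j = 2)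

/-- The facet `F_u = {p_{ij} : u_j < i ≤ 3}` of the Stanley–Reisner complex of `M_n`;
vertices are pairs `(i, j)` with `i : Fin 3` (0-based row) and `j : Fin n` (column), and
`(i, j) ∈ F_u` iff `u j ≤ i`. -/
def facet (u : Fin n → Fin 3) : Finset (Fin 3 × Fin n) :=
  Finset.univ.filter fun p => u p.2 ≤ p.1

/-- The distinguished face `η_u = {p_{u_j+1, j} : j > 1, u_j + 1 ≤ 2}`
(0-based: the vertices `(u_j, j)` for `j ≥ 1` with `u_j ≤ 1`). -/
def eta (u : Fin n → Fin 3) : Finset (Fin 3 × Fin n) :=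
  Finset.univ.filter fun p => 0 < (p.2 : ℕ) ∧ p.1 = u p.2 ∧ (u p.2 : ℕ) ≤ 1

/-- Lexicographic order on exponent vectors. -/
def LexLt (u' u : Fin n → Fin 3) : Prop :=
  ∃ j, (∀ m, m < j → u' m = u m) ∧ u' j < u j

/-- The first admissible vector `(0, 1, 2, 2, …, 2)`. -/
def uFirst (n : ℕ) : Fin n → Fin 3 :=
  fun j => if (j : ℕ) = 0 then 0 else if (j : ℕ) = 1 then 1 else 2

lemma sum_admissible (u : Fin n → Fin 3) (hu : Admissible u) :
    (∑ j, (u j : ℕ)) + 3 = 2 * n := by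
  rcases hu with ⟨h12, hcard⟩ | ⟨j₀, j₁, hj, h0, h1, hrest⟩
  · have key : ∀ j : Fin n, (u j : ℕ) + (if u j = 1 then 1 else 0) = 2 := by
      intro j; rcases h12 j with h | h <;> simp [h]
    calc (∑ j, (u j : ℕ)) + 3
        = (∑ j, (u j : ℕ)) + ∑ j, (if u j = 1 then 1 else 0) := by
          have h3 : (∑ j, if u j = 1 then (1:ℕ) else 0) = 3 := by
            rw [← Finset.card_filter]; convert hcard
          rw [h3]
      _ = ∑ j, ((u j : ℕ) + if u j = 1 then 1 else 0) := Finset.sum_add_distrib.symm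
      _ = ∑ _j : Fin n, 2 := Finset.sum_congr rfl fun j _ => key j
      _ = 2 * n := by simp [mul_comm]
  · have key : ∀ j : Fin n,
        (u j : ℕ) + ((if j = j₀ then 2 else 0) + (if j = j₁ then 1 else 0)) = 2 := by
      intro j
      by_cases e0 : j = j₀
      · subst e0; simp [h0, hj]
      · by_cases e1 : j = j₁
        · subst e1; simp [h1, e0]
        · simp [e0, e1, hrest j e0 e1]
    calc (∑ j, (u j : ℕ)) + 3
        = (∑ j, (u j : ℕ)) +
            ∑ j, ((if j = j₀ then 2 else 0) + (if j = j₁ then 1 else 0)) := by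
          rw [Finset.sum_add_distrib]; simp
      _ = ∑ j, ((u j : ℕ) + ((if j = j₀ then 2 else 0) + (if j = j₁ then 1 else 0))) :=
          Finset.sum_add_distrib.symm
      _ = ∑ _j : Fin n, 2 := Finset.sum_congr rfl fun j _ => key j
      _ = 2 * n := by simp [mul_comm]

lemma backward (u u' : Fin n → Fin 3) (hu : Admissible u) (hu' : Admissible u')
    (hlt : LexLt u' u) (G : Finset (Fin 3 × Fin n)) (heta : eta u ⊆ G)
    (hGf : G ⊆ facet u') : False := by
  classical
  obtain ⟨j, hpre, hj⟩ := hlt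
  have hsum : (∑ m, (u m : ℕ)) = ∑ m, (u' m : ℕ) := by
    have h1 := sum_admissible u hu; have h2 := sum_admissible u' hu'; omega
  have split : ∀ v : Fin n → Fin 3,
      (∑ m, (v m : ℕ)) = (∑ m ∈ Finset.univ.filter (· < j), (v m : ℕ)) +
        ((v j : ℕ) + ∑ m ∈ Finset.univ.filter (j < ·), (v m : ℕ)) := by
    intro v
    rw [← Finset.sum_filter_add_sum_filter_not Finset.univ (· < j)]
    congr 1
    have he : Finset.univ.filter (fun m => ¬ m < j) =
        insert j (Finset.univ.filter (j < ·)) := by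
      ext m
      simp only [Finset.mem_filter, Finset.mem_univ, true_and, Finset.mem_insert, not_lt]
      constructor
      · intro h
        rcases lt_or_eq_of_le h with h | h
        · exact Or.inr h
        · exact Or.inl h.symm
      · rintro (rfl | h)
        · exact le_refl _
        · exact h.le
    rw [he, Finset.sum_insert (by simp)]
  have hpre' : (∑ m ∈ Finset.univ.filter (· < j), (u m : ℕ)) =
      ∑ m ∈ Finset.univ.filter (· < j), (u' m : ℕ) := by
    refine Finset.sum_congr rfl ?_
    intro m hm
    simp only [Finset.mem_filter] at hm
    rw [hpre m hm.2]
  have hjv : (u' j : ℕ) < u j := hj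
  have htail : (∑ m ∈ Finset.univ.filter (j < ·), (u m : ℕ)) <
      ∑ m ∈ Finset.univ.filter (j < ·), (u' m : ℕ) := by
    have h1 := split u; have h2 := split u'; omega
  obtain ⟨k, hk, hku⟩ := Finset.exists_lt_of_sum_lt htail
  simp only [Finset.mem_filter, Finset.mem_univ, true_and] at hk
  have hkpos : 0 < (k : ℕ) := lt_of_le_of_lt (Nat.zero_le _) hk
  have hle2 : (u' k : ℕ) ≤ 2 := by omega
  have hmem : ((u k, k) : Fin 3 × Fin n) ∈ eta u := by
    simp only [eta, Finset.mem_filter, Finset.mem_univ, true_and]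
    exact ⟨hkpos, by omega⟩
  have hfct := hGf (heta hmem)
  simp only [facet, Finset.mem_filter, Finset.mem_univ, true_and] at hfct
  have : (u' k : ℕ) ≤ (u k : ℕ) := hfct
  omega

lemma G_subset_facet (u u' : Fin n → Fin 3) (G : Finset (Fin 3 × Fin n))
    (hG : G ⊆ facet u) (k : Fin n) (hk : ((u k, k) : Fin 3 × Fin n) ∉ G)
    (h1 : (u' k : ℕ) = (u k : ℕ) + 1)
    (h2 : ∀ j, j ≠ k → (u' j : ℕ) ≤ (u j : ℕ)) : G ⊆ facet u' := by
  intro p hp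
  have hpu : (u p.2 : ℕ) ≤ (p.1 : ℕ) := by
    have h := hG hp
    simp only [facet, Finset.mem_filter, Finset.mem_univ, true_and, Fin.le_def] at h
    exact h
  simp only [facet, Finset.mem_filter, Finset.mem_univ, true_and, Fin.le_def]
  by_cases e : p.2 = k
  · have hne : p ≠ (u k, k) := fun h => hk (h ▸ hp)
    have hne1 : p.1 ≠ u k := by
      intro h
      exact hne (Prod.ext h e)
    have : (p.1 : ℕ) ≠ (u k : ℕ) := fun h => hne1 (Fin.ext h)
    rw [e] at hpu ⊢
    omega
  · exact le_trans (h2 p.2 e) hpu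
lemma twoPoint (u : Fin n → Fin 3) (G : Finset (Fin 3 × Fin n)) (hG : G ⊆ facet u)
    (m k : Fin n) (a b : Fin 3) (hmk : (m : ℕ) < (k : ℕ)) (ha : a < u m)
    (hb : (b : ℕ) = (u k : ℕ) + 1) (hpG : ((u k, k) : Fin 3 × Fin n) ∉ G) :
    LexLt (fun j => if j = m then a else if j = k then b else u j) u ∧
      G ⊆ facet (fun j => if j = m then a else if j = k then b else u j) := by
  have hmkne : m ≠ k := Fin.ne_of_val_ne (Nat.ne_of_lt hmk)
  constructor
  · refine ⟨m, ?_, ?_⟩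
    · intro m' hm'
      have hlt : (m' : ℕ) < (m : ℕ) := hm'
      have h1 : m' ≠ m := Fin.ne_of_val_ne (Nat.ne_of_lt hlt)
      have h2 : m' ≠ k := Fin.ne_of_val_ne (by omega)
      simp [h1, h2]
    · simpa using ha
  · refine G_subset_facet u _ G hG k hpG ?_ ?_
    · simp only [if_neg hmkne.symm, if_pos rfl]
      exact hb
    · intro j hj
      by_cases e : j = m
      · subst e
        simp only [if_pos rfl]
        exact Fin.lt_def.mp ha |>.le
      · simp [e, hj]


/-- Shelling property: for each admissible `u` other than the first, and each face `G`
of the facet `F_u`, `G` is contained in no earlier facet if and only if `G` contains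
`η_u`; i.e. `η_u` is the unique minimal face of `F_u` not lying in an earlier facet. -/
theorem stmt13 (hn : 2 ≤ n) (u : Fin n → Fin 3) (hu : Admissible u)
    (hne : u ≠ uFirst n) (G : Finset (Fin 3 × Fin n)) (hG : G ⊆ facet u) :
    (∀ u' : Fin n → Fin 3, Admissible u' → LexLt u' u → ¬ G ⊆ facet u') ↔
      eta u ⊆ G := by

  classical
  constructor
  · intro H
    by_contra hnotsub
    obtain ⟨p, hpeta, hpG⟩ := Finset.not_subset.mp hnotsub
    simp only [eta, Finset.mem_filter, Finset.mem_univ, true_and] at hpeta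
    obtain ⟨hkpos, hp1, hple⟩ := hpeta
    set k := p.2 with hkdef
    have hpk : p = (u k, k) := Prod.ext hp1 rfl
    rw [hpk] at hpG
    obtain ⟨i0, hi0⟩ : ∃ m : Fin n, (m : ℕ) = 0 := ⟨⟨0, by omega⟩, rfl⟩
    obtain ⟨i1, hi1⟩ : ∃ m : Fin n, (m : ℕ) = 1 := ⟨⟨1, by omega⟩, rfl⟩
    rcases hu with ⟨h12, hcard⟩ | ⟨j₀, j₁, hj01, h0, h1q, hrest⟩
    · -- type P
      have hk1 : u k = 1 := by
        rcases h12 k with h | h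
        · exact h
        · rw [h] at hple; exact absurd hple (by decide)
      by_cases hm : ∃ m : Fin n, (m : ℕ) < (k : ℕ) ∧ u m = 2
      · -- lower an earlier 2 to 1, raise u k to 2 : type P again
        obtain ⟨m, hmk, hm2⟩ := hm
        obtain ⟨hlex, hsub⟩ := twoPoint u G hG m k 1 2 hmk
          (by rw [hm2]; decide) (by rw [hk1]; decide) hpG
        refine H _ ?_ hlex hsub
        left
        have hmkne : m ≠ k := Fin.ne_of_val_ne (Nat.ne_of_lt hmk)
        constructor
        · intro j
          by_cases e1 : j = m
          · simp [e1]
          · by_cases e2 : j = k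
            · simp [e1, e2, Ne.symm hmkne]
            · simpa [e1, e2] using h12 j
        · have hset : (Finset.univ.filter fun j =>
              (if j = m then (1 : Fin 3) else if j = k then 2 else u j) = 1) =
              insert m ((Finset.univ.filter fun j => u j = 1).erase k) := by
            ext j
            simp only [Finset.mem_filter, Finset.mem_univ, true_and,
              Finset.mem_insert, Finset.mem_erase]
            by_cases e1 : j = m
            · simp [e1]
            · by_cases e2 : j = k
              · subst e2
                rw [if_neg e1, if_pos rfl]
                constructor
                · intro h; exact absurd h (by decide)
                · rintro (h | ⟨h, -⟩)
                  · exact absurd h.symm hmkne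
                  · exact absurd rfl h
              · simp [e1, e2]
          rw [hset, Finset.card_insert_of_notMem, Finset.card_erase_of_mem, hcard]
          · simp [hk1]
          · simp [Finset.mem_erase, hm2]
      · -- all earlier coords are 1 : lower position 0 to 0, raise u k to 2 : type Q
        push_neg at hm
        have hik : (i0 : ℕ) < (k : ℕ) := by omega
        have hu0 : u i0 = 1 := by
          rcases h12 i0 with h | h
          · exact h
          · exact absurd h (hm i0 hik)
        have hi0k : i0 ≠ k := Fin.ne_of_val_ne (by omega)
        -- find the third 1-position b
        have hnotsub2 : ¬ (Finset.univ.filter fun j => u j = 1) ⊆ {i0, k} := by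
          intro hsub2
          have hc := Finset.card_le_card hsub2
          have : ({i0, k} : Finset (Fin n)).card ≤ 2 :=
            le_trans (Finset.card_insert_le _ _) (by simp)
          omega
        obtain ⟨b, hbF, hbni⟩ := Finset.not_subset.mp hnotsub2
        simp only [Finset.mem_filter, Finset.mem_univ, true_and] at hbF
        simp only [Finset.mem_insert, Finset.mem_singleton, not_or] at hbni
        obtain ⟨hbi0, hbk⟩ := hbni
        have hFeq : (Finset.univ.filter fun j => u j = 1) = {i0, k, b} := by
          refine (Finset.eq_of_subset_of_card_le ?_ ?_).symm
          · intro x hx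
            simp only [Finset.mem_insert, Finset.mem_singleton] at hx
            rcases hx with rfl | rfl | rfl <;>
              simp [hu0, hk1, hbF]
          · rw [hcard]
            have : ({i0, k, b} : Finset (Fin n)).card = 3 := by
              rw [Finset.card_insert_of_notMem (by simp [hi0k, Ne.symm hbi0]),
                Finset.card_insert_of_notMem (by simp [Ne.symm hbk]),
                Finset.card_singleton]
            omega
        obtain ⟨hlex, hsub⟩ := twoPoint u G hG i0 k 0 2 hik
          (by rw [hu0]; decide) (by rw [hk1]; decide) hpG
        refine H _ ?_ hlex hsub
        right
        refine ⟨i0, b, Ne.symm hbi0, ?_, ?_, ?_⟩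
        · simp
        · simp [hbi0, hbk]
          exact hbF
        · intro j hji0 hjb
          by_cases e2 : j = k
          · simp [hji0, e2, Ne.symm hi0k]
          · simp only [if_neg hji0, if_neg e2]
            rcases h12 j with h | h
            · exfalso
              have : j ∈ (Finset.univ.filter fun j => u j = 1) := by simp [h]
              rw [hFeq] at this
              simp only [Finset.mem_insert, Finset.mem_singleton] at this
              rcases this with rfl | rfl | rfl
              · exact hji0 rfl
              · exact e2 rfl
              · exact hjb rfl
            · exact h
    · -- type Q
      have hk01 : k = j₀ ∨ k = j₁ := by
        by_contra h
        push_neg at h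
        rw [hrest k h.1 h.2] at hple
        exact absurd hple (by decide)
      have hval01 : (j₀ : ℕ) ≠ (j₁ : ℕ) := fun h => hj01 (Fin.ext h)
      rcases hk01 with rfl | rfl
      · -- k = j₀, u k = 0
        by_cases hcase : (j₁ : ℕ) < (k : ℕ)
        · -- lower j₁ to 0, raise u k to 1 : type Q
          obtain ⟨hlex, hsub⟩ := twoPoint u G hG j₁ k 0 1 hcase
            (by rw [h1q]; decide) (by rw [h0]; decide) hpG
          refine H _ ?_ hlex hsub
          right
          refine ⟨j₁, k, hj01.symm, by simp, ?_, ?_⟩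
          · simp [hj01]
          · intro j hjj1 hjk
            simp only [if_neg hjj1, if_neg hjk]
            exact hrest j hjk hjj1
        · -- k < j₁ : lower position 0 (a 2) to 1, raise u k to 1 : type P
          have hkj1 : (k : ℕ) < (j₁ : ℕ) := by
            have := hval01
            omega
          have hik : (i0 : ℕ) < (k : ℕ) := by omega
          have hi0k : i0 ≠ k := Fin.ne_of_val_ne (by omega)
          have hi0j1 : i0 ≠ j₁ := Fin.ne_of_val_ne (by omega)
          have hu0 : u i0 = 2 := hrest i0 hi0k hi0j1
          obtain ⟨hlex, hsub⟩ := twoPoint u G hG i0 k 1 1 hik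
            (by rw [hu0]; decide) (by rw [h0]; decide) hpG
          refine H _ ?_ hlex hsub
          left
          constructor
          · intro j
            by_cases e1 : j = i0
            · simp [e1]
            · by_cases e2 : j = k
              · simp [e1, e2]
              · by_cases e3 : j = j₁
                · simp [e1, e2, e3, h1q]
                · simp [e1, e2, hrest j e2 e3]
          · have hset : (Finset.univ.filter fun j =>
                (if j = i0 then (1 : Fin 3) else if j = k then 1 else u j) = 1) =
                {i0, k, j₁} := by
              ext j
              simp only [Finset.mem_filter, Finset.mem_univ, true_and,
                Finset.mem_insert, Finset.mem_singleton]
              by_cases e1 : j = i0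
              · simp [e1]
              · by_cases e2 : j = k
                · simp [e1, e2]
                · by_cases e3 : j = j₁
                  · simp [e1, e2, e3, h1q]
                  · simp [e1, e2, e3, hrest j e2 e3]
            rw [hset]
            rw [Finset.card_insert_of_notMem (by simp [hi0k, hi0j1]),
              Finset.card_insert_of_notMem
                (by simp [show k ≠ j₁ from Fin.ne_of_val_ne (by omega)]),
              Finset.card_singleton]
      · -- k = j₁, u k = 1
        by_cases hex : ∃ m : Fin n, (m : ℕ) < (k : ℕ) ∧ m ≠ j₀
        · -- lower that 2 to 1, raise u k to 2 : type Q
          obtain ⟨m, hmk, hmj0⟩ := hex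
          have hmkne : m ≠ k := Fin.ne_of_val_ne (Nat.ne_of_lt hmk)
          have hum : u m = 2 := hrest m hmj0 hmkne
          obtain ⟨hlex, hsub⟩ := twoPoint u G hG m k 1 2 hmk
            (by rw [hum]; decide) (by rw [h1q]; decide) hpG
          refine H _ ?_ hlex hsub
          right
          have hj0k : j₀ ≠ k := hj01
          have hj0m : j₀ ≠ m := Ne.symm hmj0
          refine ⟨j₀, m, hj0m, ?_, by simp, ?_⟩
          · simp [hj0m, hj0k, h0]
          · intro j hjj0 hjm
            by_cases e2 : j = k
            · simp [hjm, e2, Ne.symm hmkne]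
            · simp only [if_neg hjm, if_neg e2]
              exact hrest j hjj0 e2
        · -- u must be uFirst : contradiction
          push_neg at hex
          have e0 : i0 = j₀ := hex i0 (by omega)
          have hkv : (k : ℕ) = 1 := by
            by_contra h
            have h2 : 2 ≤ (k : ℕ) := by omega
            have e1 : i1 = j₀ := hex i1 (by omega)
            have : (i0 : ℕ) = (i1 : ℕ) := by rw [e0, e1]
            omega
          exfalso
          apply hne
          funext j
          by_cases jv0 : (j : ℕ) = 0
          · have hj : j = j₀ := by
              rw [← e0]; exact Fin.ext (by omega)
            rw [hj, h0]
            simp [uFirst, ← hj, jv0]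
          · by_cases jv1 : (j : ℕ) = 1
            · have hj : j = k := Fin.ext (by omega)
              rw [hj, h1q]
              simp [uFirst, ← hj, jv0, jv1]
            · have hjj0 : j ≠ j₀ := fun h => by
                rw [h, ← e0] at jv0; exact jv0 hi0
              have hjk : j ≠ k := Fin.ne_of_val_ne (by omega)
              rw [hrest j hjj0 hjk]
              simp [uFirst, jv0, jv1]
  · intro heta u' hu' hlt hsub
    exact backward u u' hu hu' hlt G heta hsub


end
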